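/- Let (g, D) be an axial pair for an action of G on X, M = m(e), and for a wild element w let I(w) = {i ∈ ℤ : w(gⁱD) is unbounded}. Then I(w) is nonempty and has diameter at most 2M, i.e., |i − j| ≤ 2M for all i, j ∈ I(w). -/
import Mathlib


open Pointwise

section AxialDefs

variable {G : Type*} [Group G] {X : Type*} [MulAction G X]

/-- A subset of `X` is *bounded* (w.r.t. `g` and the fundamental domain `D`)
if it is contained in a finite union of translates `g^i • D`. -/
def Bdd (g : G) (D : Set X) (B : Set X) : Prop :=
  ∃ s : Finset ℤ, B ⊆ ⋃ i ∈ s, (g ^ i) • D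

/-- An element is *tame* if it translates bounded sets to bounded sets. -/
def Tame (g : G) (D : Set X) (t : G) : Prop :=
  ∀ B : Set X, Bdd g D B → Bdd g D (t • B)

/-- `D` is a fundamental domain for the action of `⟨g⟩`: `X` is the disjoint
union of the translates `g^n • D`. -/
def FundDom (g : G) (D : Set X) : Prop :=
  ∀ x : X, ∃! n : ℤ, x ∈ (g ^ n) • D

/-- `(g, D)` is an *axial pair*. -/
def AxialPair (g : G) (D : Set X) : Prop :=
  FundDom g D ∧
  {t : G | Tame g D t ∧ (t • D ∩ D).Nonempty}.Finite ∧
  ∀ h : G, ∃ B : Set X, Bdd g D B ∧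
    ∀ w : G, ¬ Bdd g D ((h * w) • D) →
      ∃ n : ℤ, w • B ∪ (g ^ n) • B = Set.univ

/-- The interval `D_{[a,b]} = ∪_{i=a}^{b} g^i • D`. -/
def Dint (g : G) (D : Set X) (a b : ℤ) : Set X :=
  ⋃ i ∈ Set.Icc a b, (g ^ i) • D

/-- `m` witnesses Axiom 2 (in the interval form (2')) for `h`. -/
def mOK (g : G) (D : Set X) (h : G) (m : ℕ) : Prop :=
  ∀ w : G, ¬ Bdd g D ((h * w) • D) →
    ∃ n : ℤ, w • Dint g D (-(m : ℤ)) (m : ℤ) ∪ (g ^ n) • Dint g D (-(m : ℤ)) (m : ℤ) = Set.univ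

/-- `m(h)`: the minimal `m` as in Axiom (2'). -/
noncomputable def mval (g : G) (D : Set X) (h : G) : ℕ :=
  sInf {m : ℕ | mOK g D h m}

/-- `I(w) = {i ∈ ℤ : w·(gⁱD) is unbounded}`. -/
def Iset (g : G) (D : Set X) (w : G) : Set ℤ :=
  {i : ℤ | ¬ Bdd g D ((w * g ^ i) • D)}

/-- The wilderness center `i(w) = ⌊(min I(w) + max I(w))/2⌋`. -/
noncomputable def ic (g : G) (D : Set X) (w : G) : ℤ :=
  Int.fdiv (sInf (Iset g D w) + sSup (Iset g D w)) 2

end AxialDefs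

section Aux

variable {G : Type*} [Group G] {X : Type*} [MulAction G X]

lemma bdd_mono {g : G} {D B B' : Set X} (h : B' ⊆ B) (hB : Bdd g D B) : Bdd g D B' := by
  obtain ⟨s, hs⟩ := hB; exact ⟨s, h.trans hs⟩

lemma bdd_smul_pow {g : G} {D B : Set X} (n : ℤ) (hB : Bdd g D B) :
    Bdd g D ((g ^ n) • B) := by
  obtain ⟨s, hs⟩ := hB
  refine ⟨s.image (fun i => n + i), ?_⟩
  rintro x ⟨y, hy, rfl⟩
  have := hs hy
  simp only [Set.mem_iUnion, Finset.mem_image] at this ⊢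
  obtain ⟨i, hi, hyi⟩ := this
  exact ⟨n + i, ⟨i, hi, rfl⟩, by rw [zpow_add, mul_smul]; exact Set.smul_mem_smul_set hyi⟩

lemma bdd_Dint {g : G} {D : Set X} (a b : ℤ) : Bdd g D (Dint g D a b) := by
  refine ⟨Finset.Icc a b, ?_⟩
  intro x hx
  simp only [Dint, Set.mem_iUnion, Set.mem_Icc] at hx
  simp only [Set.mem_iUnion, Finset.mem_Icc]
  exact hx

lemma bdd_biUnion {g : G} {D : Set X} (s : Finset ℤ) (f : ℤ → Set X)
    (h : ∀ i ∈ s, Bdd g D (f i)) : Bdd g D (⋃ i ∈ s, f i) := by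
  classical
  induction s using Finset.induction with
  | empty => exact ⟨∅, by simp⟩
  | @insert a s ha ih =>
    obtain ⟨t, ht⟩ := h a (Finset.mem_insert_self a s)
    obtain ⟨u, hu⟩ := ih (fun i hi => h i (Finset.mem_insert_of_mem hi))
    refine ⟨t ∪ u, ?_⟩
    intro x hx
    simp only [Set.mem_iUnion, Finset.mem_insert, Finset.mem_union] at hx ⊢
    obtain ⟨i, hi | hi, hxi⟩ := hx
    · subst hi
      obtain ⟨k, hk, hxk⟩ := Set.mem_iUnion₂.mp (ht hxi)
      exact ⟨k, Or.inl hk, hxk⟩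
    · have : x ∈ ⋃ j ∈ s, f j := Set.mem_iUnion₂.mpr ⟨i, hi, hxi⟩
      obtain ⟨k, hk, hxk⟩ := Set.mem_iUnion₂.mp (hu this)
      exact ⟨k, Or.inr hk, hxk⟩

end Aux

/-- for wild `w`, `I(w)` is nonempty and has diameter at most `2M`. -/
theorem Iset_nonempty_and_small {G : Type*} [Group G] {X : Type*} [MulAction G X]
    [Nonempty X] (g : G) (D : Set X) (hax : AxialPair g D)
    (w : G) (hw : ¬ Tame g D w) :
    (Iset g D w).Nonempty ∧
    ∀ i ∈ Iset g D w, ∀ j ∈ Iset g D w, |i - j| ≤ 2 * (mval g D 1 : ℤ) := by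
  classical
  -- Part 1: nonemptiness
  have hne : (Iset g D w).Nonempty := by
    by_contra hne
    apply hw
    intro B hB
    obtain ⟨s, hs⟩ := hB
    have hsub : w • B ⊆ ⋃ i ∈ s, (w * g ^ i) • D := by
      rintro x ⟨y, hy, rfl⟩
      obtain ⟨i, hi, hyi⟩ := Set.mem_iUnion₂.mp (hs hy)
      exact Set.mem_iUnion₂.mpr ⟨i, hi, by rw [mul_smul]; exact Set.smul_mem_smul_set hyi⟩
    refine bdd_mono hsub (bdd_biUnion s _ ?_)
    intro i _
    by_contra hbd
    exact hne ⟨i, hbd⟩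
  refine ⟨hne, ?_⟩
  -- mOK holds for some m
  obtain ⟨B, ⟨s, hs⟩, hprop⟩ := hax.2.2 1
  set m : ℕ := s.sup fun i => i.natAbs with hm
  have hBsub : B ⊆ Dint g D (-(m : ℤ)) (m : ℤ) := by
    intro x hx
    obtain ⟨i, hi, hxi⟩ := Set.mem_iUnion₂.mp (hs hx)
    have hle : i.natAbs ≤ m := Finset.le_sup (f := fun i => i.natAbs) hi
    exact Set.mem_iUnion₂.mpr ⟨i, Set.mem_Icc.mpr ⟨by omega, by omega⟩, hxi⟩
  have hmOK : mOK g D 1 m := by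
    intro w' hw'
    obtain ⟨n, hn⟩ := hprop w' hw'
    refine ⟨n, Set.eq_univ_of_univ_subset ?_⟩
    rw [← hn]
    exact Set.union_subset_union (Set.smul_set_mono hBsub) (Set.smul_set_mono hBsub)
  have hM : mOK g D 1 (mval g D 1) := Nat.sInf_mem (⟨m, hmOK⟩ : {m : ℕ | mOK g D 1 m}.Nonempty)
  set M : ℕ := mval g D 1 with hMdef
  -- Part 2: diameter bound
  intro i hi j hj
  by_contra hgt
  push_neg at hgt
  have hi' : ¬ Bdd g D ((1 * (w * g ^ i)) • D) := by rw [one_mul]; exact hi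
  obtain ⟨n, hn⟩ := hM (w * g ^ i) hi'
  -- disjointness of (w*g^j)•D from (w*g^i)•Dint(-M,M)
  have hdisj : ∀ x ∈ (w * g ^ j) • D, x ∉ (w * g ^ i) • Dint g D (-(M : ℤ)) (M : ℤ) := by
    rintro x ⟨d, hd, rfl⟩ ⟨y, hy, hxy⟩
    obtain ⟨k, hk, hyk⟩ := Set.mem_iUnion₂.mp hy
    obtain ⟨d', hd', rfl⟩ := hyk
    rw [Set.mem_Icc] at hk
    have heq : (g ^ j) • d = (g ^ (i + k)) • d' := by
      dsimp only at hxy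
      apply MulAction.injective w
      show w • ((g ^ j) • d) = w • ((g ^ (i + k)) • d')
      rw [← mul_smul, ← mul_smul, ← hxy, mul_smul, mul_smul, zpow_add, mul_smul]
    have h1 : (g ^ j) • d ∈ (g ^ j) • D := Set.smul_mem_smul_set hd
    have h2 : (g ^ j) • d ∈ (g ^ (i + k)) • D := by
      rw [heq]; exact Set.smul_mem_smul_set hd'
    have hji : j = i + k := (hax.1 ((g ^ j) • d)).unique h1 h2
    have : |i - j| ≤ (M : ℤ) := by
      rw [hji, abs_le]; constructor <;> omega
    omega
  -- hence (w*g^j)•D is bounded, contradiction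
  apply hj
  have hsub : (w * g ^ j) • D ⊆ (g ^ n) • Dint g D (-(M : ℤ)) (M : ℤ) := by
    intro x hx
    have hx2 : x ∈ (w * g ^ i) • Dint g D (-(M : ℤ)) (M : ℤ) ∪
        (g ^ n) • Dint g D (-(M : ℤ)) (M : ℤ) := hn ▸ Set.mem_univ x
    rcases hx2 with h | h
    · exact absurd h (hdisj x hx)
    · exact h
  exact bdd_mono hsub (bdd_smul_pow n (bdd_Dint _ _))
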